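/- arXiv:2404.02610 — 5 statements merged into one kernel-verified Lean document; each statement's English description precedes it below -/
import Mathlib

section
/- For every positive integer x, both 6x+5 and 6x+7 are prime if and only if x is NOT expressible in any of the four forms (6m−1)n + m − 1, (6m−1)n − m − 1, (6m+1)n + m − 1, (6m+1)n − m − 1 with m, n positive integers. -/
/-- For every positive integer `x`, both `6x+5` and `6x+7` are prime iff `x` is not
expressible in any of the four forms `(6m−1)n + m − 1`, `(6m−1)n − m − 1`,
`(6m+1)n + m − 1`, `(6m+1)n − m − 1` with `m, n` positive integers. -/
theorem twin_prime_iff_not_general_solution (x : ℕ) (hx : 0 < x) :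
    (Nat.Prime (6 * x + 5) ∧ Nat.Prime (6 * x + 7)) ↔
      ¬ ∃ m n : ℕ, 0 < m ∧ 0 < n ∧
        (x = (6 * m - 1) * n + m - 1 ∨
         x = (6 * m - 1) * n - m - 1 ∨
         x = (6 * m + 1) * n + m - 1 ∨
         x = (6 * m + 1) * n - m - 1) := by
  constructor
  · rintro ⟨hp5, hp7⟩ ⟨m, n, hm, hn, h | h | h | h⟩
    · -- 6x+5 = (6m-1)(6n+1)
      have h1 : (6*m-1)*(6*n+1) = 6*((6*m-1)*n) + (6*m-1) := by ring
      have h2 : (6*m-1) + 1 = 6*m := by omega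
      have hfac : 6*x+5 = (6*m-1) * (6*n+1) := by
        generalize hQ : (6*m-1)*n = Q at h1 h
        omega
      rw [hfac] at hp5
      exact Nat.not_prime_mul (by omega) (by omega) hp5
    · -- 6x+7 = (6m-1)(6n-1)
      have h1 : (6*m-1)*(6*n-1) + (6*m-1) = (6*m-1)*(6*n-1+1) := by ring
      have h2 : (6*n-1) + 1 = 6*n := by omega
      rw [h2] at h1
      have h3 : (6*m-1)*(6*n) = 6*((6*m-1)*n) := by ring
      have h4 : (6*m-1) + 1 = 6*m := by omega
      have hfac : 6*x+7 = (6*m-1) * (6*n-1) := by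
        generalize hQ : (6*m-1)*n = Q at h3 h
        generalize hR : (6*m-1)*(6*n-1) = R at h1 ⊢
        omega
      rw [hfac] at hp7
      exact Nat.not_prime_mul (by omega) (by omega) hp7
    · -- 6x+7 = (6m+1)(6n+1)
      have h1 : (6*m+1)*(6*n+1) = 6*((6*m+1)*n) + (6*m+1) := by ring
      have hfac : 6*x+7 = (6*m+1) * (6*n+1) := by
        generalize hQ : (6*m+1)*n = Q at h1 h
        omega
      rw [hfac] at hp7
      exact Nat.not_prime_mul (by omega) (by omega) hp7
    · -- 6x+5 = (6m+1)(6n-1)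
      have h1 : (6*m+1)*(6*n-1) + (6*m+1) = (6*m+1)*(6*n-1+1) := by ring
      have h2 : (6*n-1) + 1 = 6*n := by omega
      rw [h2] at h1
      have h3 : (6*m+1)*(6*n) = 6*((6*m+1)*n) := by ring
      have hfac : 6*x+5 = (6*m+1) * (6*n-1) := by
        generalize hQ : (6*m+1)*n = Q at h3 h
        generalize hR : (6*m+1)*(6*n-1) = R at h1 ⊢
        omega
      rw [hfac] at hp5
      exact Nat.not_prime_mul (by omega) (by omega) hp5
  · intro hrep
    by_contra hnp
    rw [not_and_or] at hnp
    apply hrep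
    rcases hnp with hnp | hnp
    · -- 6x+5 composite
      obtain ⟨a, hadvd, ha2, haN⟩ := Nat.exists_dvd_of_not_prime2 (by omega) hnp
      set N := 6*x+5 with hN
      obtain ⟨b, hab⟩ := hadvd
      have hb2 : 2 ≤ b := by
        rcases b with _ | _ | b
        · omega
        · omega
        · omega
      have h2a : ¬ 2 ∣ a := fun h => absurd (h.trans ⟨b, hab⟩) (by omega)
      have h3a : ¬ 3 ∣ a := fun h => absurd (h.trans ⟨b, hab⟩) (by omega)
      have h2b : ¬ 2 ∣ b := fun h => absurd (h.trans ⟨a, hab.trans (mul_comm a b)⟩) (by omega)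
      have h3b : ¬ 3 ∣ b := fun h => absurd (h.trans ⟨a, hab.trans (mul_comm a b)⟩) (by omega)
      have hamod : a % 6 = 1 ∨ a % 6 = 5 := by omega
      have hbmod : b % 6 = 1 ∨ b % 6 = 5 := by omega
      have hNmod : (a * b) % 6 = 5 := by omega
      rw [Nat.mul_mod] at hNmod
      rcases hamod with ha | ha <;> rcases hbmod with hb | hb <;> rw [ha, hb] at hNmod
      · omega
      · -- a = 6n+1, b = 6m-1 : form 1
        refine ⟨(b+1)/6, a/6, by omega, by omega, Or.inl ?_⟩
        set n := a/6 with hn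
        set m := (b+1)/6 with hm
        have han : a = 6*n+1 := by omega
        have hbm : b + 1 = 6*m := by omega
        have key : a * b + a = 6*((6*m-1)*n) + 6*n + 6*m := by
          have e1 : a * b + a = a * (b+1) := by ring
          rw [e1, hbm, han]
          have e2 : (6*m-1)*n + n = 6*(m*n) := by
            have : (6*m-1)+1 = 6*m := by omega
            calc (6*m-1)*n + n = ((6*m-1)+1)*n := by ring
              _ = 6*(m*n) := by rw [this]; ring
          generalize hQ : (6*m-1)*n = Q at e2 ⊢
          have : (6*n+1)*(6*m) = 36*(m*n) + 6*m := by ring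
          omega
        generalize hQ : (6*m-1)*n = Q at key ⊢
        omega
      · -- a = 6m-1, b = 6n+1 : form 1
        refine ⟨(a+1)/6, b/6, by omega, by omega, Or.inl ?_⟩
        set n := b/6 with hn
        set m := (a+1)/6 with hm
        have han : b = 6*n+1 := by omega
        have hbm : a + 1 = 6*m := by omega
        have key : a * b + b = 6*((6*m-1)*n) + 6*n + 6*m := by
          have e1 : a * b + b = (a+1) * b := by ring
          rw [e1, hbm, han]
          have e2 : (6*m-1)*n + n = 6*(m*n) := by
            have : (6*m-1)+1 = 6*m := by omega
            calc (6*m-1)*n + n = ((6*m-1)+1)*n := by ring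
              _ = 6*(m*n) := by rw [this]; ring
          generalize hQ : (6*m-1)*n = Q at e2 ⊢
          have : (6*m)*(6*n+1) = 36*(m*n) + 6*m := by ring
          omega
        generalize hQ : (6*m-1)*n = Q at key ⊢
        omega
      · omega
    · -- 6x+7 composite
      obtain ⟨a, hadvd, ha2, haN⟩ := Nat.exists_dvd_of_not_prime2 (by omega) hnp
      set N := 6*x+7 with hN
      obtain ⟨b, hab⟩ := hadvd
      have hb2 : 2 ≤ b := by
        rcases b with _ | _ | b
        · omega
        · omega
        · omega
      have h2a : ¬ 2 ∣ a := fun h => absurd (h.trans ⟨b, hab⟩) (by omega)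
      have h3a : ¬ 3 ∣ a := fun h => absurd (h.trans ⟨b, hab⟩) (by omega)
      have h2b : ¬ 2 ∣ b := fun h => absurd (h.trans ⟨a, hab.trans (mul_comm a b)⟩) (by omega)
      have h3b : ¬ 3 ∣ b := fun h => absurd (h.trans ⟨a, hab.trans (mul_comm a b)⟩) (by omega)
      have hamod : a % 6 = 1 ∨ a % 6 = 5 := by omega
      have hbmod : b % 6 = 1 ∨ b % 6 = 5 := by omega
      have hNmod : (a * b) % 6 = 1 := by omega
      rw [Nat.mul_mod] at hNmod
      rcases hamod with ha | ha <;> rcases hbmod with hb | hb <;> rw [ha, hb] at hNmod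
      · -- a = 6m+1, b = 6n+1 : form 3
        refine ⟨a/6, b/6, by omega, by omega, Or.inr (Or.inr (Or.inl ?_))⟩
        set m := a/6 with hm
        set n := b/6 with hn
        have ham : a = 6*m+1 := by omega
        have hbn : b = 6*n+1 := by omega
        have key : a * b = 6*((6*m+1)*n) + 6*m + 1 := by
          rw [ham, hbn]; ring
        generalize hQ : (6*m+1)*n = Q at key ⊢
        omega
      · omega
      · omega
      · -- a = 6m-1, b = 6n-1 : form 2
        refine ⟨(a+1)/6, (b+1)/6, by omega, by omega, Or.inr (Or.inl ?_)⟩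
        set m := (a+1)/6 with hm
        set n := (b+1)/6 with hn
        have ham : a + 1 = 6*m := by omega
        have hbn : b + 1 = 6*n := by omega
        have key : a * b + 6*n + 6*m = 6*((6*m-1)*n) + 6*n + 1 := by
          have e1 : (a+1) * (b+1) = a*b + a + b + 1 := by ring
          rw [ham, hbn] at e1
          have e2 : (6*m-1)*n + n = 6*(m*n) := by
            have : (6*m-1)+1 = 6*m := by omega
            calc (6*m-1)*n + n = ((6*m-1)+1)*n := by ring
              _ = 6*(m*n) := by rw [this]; ring
          generalize hQ : (6*m-1)*n = Q at e2 ⊢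
          have : (6*m)*(6*n) = 36*(m*n) := by ring
          omega
        generalize hQ : (6*m-1)*n = Q at key ⊢
        omega
end

section
/- For every positive integer x, both 6x+7 and 6x+11 are prime if and only if x is NOT expressible in any of the four forms (6m−1)n + m − 2, (6m−1)n − m − 1, (6m+1)n + m − 1, (6m+1)n − m − 2 with m, n positive integers. -/
/-- For every positive integer `x`, both `6x+7` and `6x+11` are prime iff `x` is not
expressible in any of the four forms `(6m−1)n + m − 2`, `(6m−1)n − m − 1`,
`(6m+1)n + m − 1`, `(6m+1)n − m − 2` with `m, n` positive integers. -/
theorem cousin_prime_iff_not_general_solution (x : ℕ) (hx : 0 < x) :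
    (Nat.Prime (6 * x + 7) ∧ Nat.Prime (6 * x + 11)) ↔
      ¬ ∃ m n : ℕ, 0 < m ∧ 0 < n ∧
        (x = (6 * m - 1) * n + m - 2 ∨
         x = (6 * m - 1) * n - m - 1 ∨
         x = (6 * m + 1) * n + m - 1 ∨
         x = (6 * m + 1) * n - m - 2) := by
  constructor
  · rintro ⟨hp, hq⟩ ⟨m, n, hm, hn, h⟩
    rcases h with h | h | h | h
    · set a := 6 * m - 1 with ha
      have hT : a ≤ a * n := Nat.le_mul_of_pos_right _ hn
      have key : 6 * x + 11 = a * (6 * n + 1) := by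
        have e : a * (6 * n + 1) = 6 * (a * n) + a := by ring
        omega
      rw [key] at hq
      exact Nat.not_prime_mul (by omega) (by omega) hq
    · set a := 6 * m - 1 with ha
      have hT : a ≤ a * n := Nat.le_mul_of_pos_right _ hn
      have key : 6 * x + 7 = a * (6 * n - 1) := by
        have e1 : a * (6 * n - 1) + a = 6 * (a * n) := by
          have h1 : (6 * n - 1) + 1 = 6 * n := by omega
          calc a * (6 * n - 1) + a = a * ((6 * n - 1) + 1) := by ring
            _ = a * (6 * n) := by rw [h1]
            _ = 6 * (a * n) := by ring
        omega
      rw [key] at hp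
      exact Nat.not_prime_mul (by omega) (by omega) hp
    · have hT : 6 * m + 1 ≤ (6 * m + 1) * n := Nat.le_mul_of_pos_right _ hn
      have key : 6 * x + 7 = (6 * m + 1) * (6 * n + 1) := by
        have e : (6 * m + 1) * (6 * n + 1) = 6 * ((6 * m + 1) * n) + (6 * m + 1) := by
          ring
        omega
      rw [key] at hp
      exact Nat.not_prime_mul (by omega) (by omega) hp
    · have hT : 6 * m + 1 ≤ (6 * m + 1) * n := Nat.le_mul_of_pos_right _ hn
      have key : 6 * x + 11 = (6 * m + 1) * (6 * n - 1) := by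
        have e1 : (6 * m + 1) * (6 * n - 1) + (6 * m + 1) = 6 * ((6 * m + 1) * n) := by
          have h1 : (6 * n - 1) + 1 = 6 * n := by omega
          calc (6 * m + 1) * (6 * n - 1) + (6 * m + 1)
              = (6 * m + 1) * ((6 * n - 1) + 1) := by ring
            _ = (6 * m + 1) * (6 * n) := by rw [h1]
            _ = 6 * ((6 * m + 1) * n) := by ring
        omega
      rw [key] at hq
      exact Nat.not_prime_mul (by omega) (by omega) hq
  · intro hne
    by_contra hc
    rw [not_and_or] at hc
    apply hne
    rcases hc with hcomp | hcomp
    · -- 6x+7 is composite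
      obtain ⟨a, hd, ha2, halt⟩ := Nat.exists_dvd_of_not_prime2 (by omega) hcomp
      obtain ⟨b, hab⟩ := hd
      have hb2 : 2 ≤ b := by
        by_contra h
        push_neg at h
        interval_cases b <;> omega
      have h2a : ¬ (2 ∣ a) := by
        intro h
        have : (2:ℕ) ∣ 6 * x + 7 := by rw [hab]; exact h.mul_right b
        omega
      have h3a : ¬ (3 ∣ a) := by
        intro h
        have : (3:ℕ) ∣ 6 * x + 7 := by rw [hab]; exact h.mul_right b
        omega
      have h2b : ¬ (2 ∣ b) := by
        intro h
        have : (2:ℕ) ∣ 6 * x + 7 := by rw [hab]; exact h.mul_left a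
        omega
      have h3b : ¬ (3 ∣ b) := by
        intro h
        have : (3:ℕ) ∣ 6 * x + 7 := by rw [hab]; exact h.mul_left a
        omega
      have ha6 : a % 6 = 1 ∨ a % 6 = 5 := by omega
      have hb6 : b % 6 = 1 ∨ b % 6 = 5 := by omega
      have hmod : (6 * x + 7) % 6 = (a % 6) * (b % 6) % 6 := by
        rw [hab, Nat.mul_mod]
      rcases ha6 with ha6 | ha6 <;> rcases hb6 with hb6 | hb6 <;>
        rw [ha6, hb6] at hmod
      · -- a ≡ 1, b ≡ 1 : third form
        refine ⟨a / 6, b / 6, by omega, by omega, Or.inr (Or.inr (Or.inl ?_))⟩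
        have ham : a = 6 * (a / 6) + 1 := by omega
        have hbn : b = 6 * (b / 6) + 1 := by omega
        set m := a / 6
        set n := b / 6
        have hprod : a * b = 36 * (m * n) + 6 * m + 6 * n + 1 := by
          rw [ham, hbn]; ring
        have hlin : (6 * m + 1) * n = 6 * (m * n) + n := by ring
        omega
      · omega
      · omega
      · -- a ≡ 5, b ≡ 5 : second form
        refine ⟨(a + 1) / 6, (b + 1) / 6, by omega, by omega, Or.inr (Or.inl ?_)⟩
        have ham : a + 1 = 6 * ((a + 1) / 6) := by omega
        have hbn : b + 1 = 6 * ((b + 1) / 6) := by omega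
        set m := (a + 1) / 6
        set n := (b + 1) / 6
        have hprod : (a + 1) * (b + 1) = 36 * (m * n) := by rw [ham, hbn]; ring
        have hexp : (a + 1) * (b + 1) = a * b + a + b + 1 := by ring
        have hm1 : 1 ≤ m := by omega
        have hlin : (6 * m - 1) * n + n = 6 * (m * n) := by
          have h1 : (6 * m - 1) + 1 = 6 * m := by omega
          calc (6 * m - 1) * n + n = ((6 * m - 1) + 1) * n := by ring
            _ = 6 * (m * n) := by rw [h1]; ring
        omega
    · -- 6x+11 is composite
      obtain ⟨a, hd, ha2, halt⟩ := Nat.exists_dvd_of_not_prime2 (by omega) hcomp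
      obtain ⟨b, hab⟩ := hd
      have hb2 : 2 ≤ b := by
        by_contra h
        push_neg at h
        interval_cases b <;> omega
      have h2a : ¬ (2 ∣ a) := by
        intro h
        have : (2:ℕ) ∣ 6 * x + 11 := by rw [hab]; exact h.mul_right b
        omega
      have h3a : ¬ (3 ∣ a) := by
        intro h
        have : (3:ℕ) ∣ 6 * x + 11 := by rw [hab]; exact h.mul_right b
        omega
      have h2b : ¬ (2 ∣ b) := by
        intro h
        have : (2:ℕ) ∣ 6 * x + 11 := by rw [hab]; exact h.mul_left a
        omega
      have h3b : ¬ (3 ∣ b) := by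
        intro h
        have : (3:ℕ) ∣ 6 * x + 11 := by rw [hab]; exact h.mul_left a
        omega
      have ha6 : a % 6 = 1 ∨ a % 6 = 5 := by omega
      have hb6 : b % 6 = 1 ∨ b % 6 = 5 := by omega
      have hmod : (6 * x + 11) % 6 = (a % 6) * (b % 6) % 6 := by
        rw [hab, Nat.mul_mod]
      rcases ha6 with ha6 | ha6 <;> rcases hb6 with hb6 | hb6 <;>
        rw [ha6, hb6] at hmod
      · omega
      · -- a ≡ 1, b ≡ 5 : fourth form
        refine ⟨a / 6, (b + 1) / 6, by omega, by omega,
          Or.inr (Or.inr (Or.inr ?_))⟩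
        have ham : a = 6 * (a / 6) + 1 := by omega
        have hbn : b + 1 = 6 * ((b + 1) / 6) := by omega
        set m := a / 6
        set n := (b + 1) / 6
        have hprod : a * (b + 1) = 36 * (m * n) + 6 * n := by rw [ham, hbn]; ring
        have hexp : a * (b + 1) = a * b + a := by ring
        have hlin : (6 * m + 1) * n = 6 * (m * n) + n := by ring
        omega
      · -- a ≡ 5, b ≡ 1 : first form
        refine ⟨(a + 1) / 6, b / 6, by omega, by omega, Or.inl ?_⟩
        have ham : a + 1 = 6 * ((a + 1) / 6) := by omega
        have hbn : b = 6 * (b / 6) + 1 := by omega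
        set m := (a + 1) / 6
        set n := b / 6
        have hprod : (a + 1) * b = 36 * (m * n) + 6 * m := by rw [ham, hbn]; ring
        have hexp : (a + 1) * b = a * b + b := by ring
        have hm1 : 1 ≤ m := by omega
        have hlin : (6 * m - 1) * n + n = 6 * (m * n) := by
          have h1 : (6 * m - 1) + 1 = 6 * m := by omega
          calc (6 * m - 1) * n + n = ((6 * m - 1) + 1) * n := by ring
            _ = 6 * (m * n) := by rw [h1]; ring
        omega
      · omega
end

section
/- For every positive integer x, the number 6x+11 is prime if and only if there do NOT exist positive integers m, n with x = (6m−1)n + m − 2 or x = (6m+1)n − m − 2. -/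
/-- For every positive integer `x`, the number `6x+11` is prime iff there do not exist
positive integers `m, n` with `x = (6m−1)n + m − 2` or `x = (6m+1)n − m − 2`. -/
theorem six_x_add_eleven_prime_iff (x : ℕ) (hx : 0 < x) :
    Nat.Prime (6 * x + 11) ↔
      ¬ ∃ m n : ℕ, 0 < m ∧ 0 < n ∧
        (x = (6 * m - 1) * n + m - 2 ∨ x = (6 * m + 1) * n - m - 2) := by
  constructor
  · rintro hp ⟨m, n, hm, hn, h | h⟩
    · -- x = (6m-1)n + m - 2, so 6x+11 = (6m-1)(6n+1)
      obtain ⟨m', rfl⟩ : ∃ m', m = m' + 1 := ⟨m - 1, by omega⟩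
      have hA : 6 * (m' + 1) - 1 = 6 * m' + 5 := by omega
      rw [hA] at h
      have key : (6 * m' + 5) * (6 * n + 1) = 6 * ((6 * m' + 5) * n) + 6 * m' + 5 := by ring
      have hge : 5 ≤ (6 * m' + 5) * n := le_trans (by omega)
        (Nat.mul_le_mul (le_refl _) hn)
      have hN : 6 * x + 11 = (6 * m' + 5) * (6 * n + 1) := by omega
      have hd : (6 * m' + 5) ∣ 6 * x + 11 := ⟨6 * n + 1, hN⟩
      rcases (hp.eq_one_or_self_of_dvd _ hd) with h1 | h1
      · omega
      · rw [h1] at hN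
        have h7 : 7 ≤ 6 * n + 1 := by omega
        nlinarith
    · -- x = (6m+1)n - m - 2, so 6x+11 = (6m+1)(6n-1)
      obtain ⟨n', rfl⟩ : ∃ n', n = n' + 1 := ⟨n - 1, by omega⟩
      have key : (6 * m + 1) * (6 * n' + 5) = 6 * ((6 * m + 1) * n') + 30 * m + 5 := by ring
      have key2 : (6 * m + 1) * (n' + 1) = (6 * m + 1) * n' + 6 * m + 1 := by ring
      have hN : 6 * x + 11 = (6 * m + 1) * (6 * n' + 5) := by omega
      have hd : (6 * m + 1) ∣ 6 * x + 11 := ⟨6 * n' + 5, hN⟩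
      rcases (hp.eq_one_or_self_of_dvd _ hd) with h1 | h1
      · omega
      · rw [h1] at hN
        have h5 : 5 ≤ 6 * n' + 5 := by omega
        nlinarith
  · intro hne
    by_contra hnp
    have hp : ((6 * x + 11).minFac).Prime := Nat.minFac_prime (by omega)
    have hd : (6 * x + 11).minFac ∣ 6 * x + 11 := Nat.minFac_dvd _
    obtain ⟨p, hpdef⟩ : ∃ p, (6 * x + 11).minFac = p := ⟨_, rfl⟩
    rw [hpdef] at hp hd
    have hpN : p ≠ 6 * x + 11 := fun h => hnp (h ▸ hp)
    have hple : p ≤ 6 * x + 11 := Nat.le_of_dvd (by omega) hd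
    have hp2 : 2 ≤ p := hp.two_le
    obtain ⟨q, hpq'⟩ := hd
    have hpq : p * q = 6 * x + 11 := hpq'.symm
    have hq2 : 2 ≤ q := by
      rcases Nat.lt_or_ge q 2 with h | h
      · interval_cases q <;> omega
      · exact h
    have h5 : p % 6 * (q % 6) % 6 = 5 := by
      rw [← Nat.mul_mod, hpq]; omega
    have hr : p % 6 < 6 := Nat.mod_lt _ (by norm_num)
    have hs : q % 6 < 6 := Nat.mod_lt _ (by norm_num)
    have hcases : (p % 6 = 5 ∧ q % 6 = 1) ∨ (p % 6 = 1 ∧ q % 6 = 5) := by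
      set r := p % 6
      set s := q % 6
      interval_cases r <;> interval_cases s <;> omega
    rcases hcases with ⟨hpr, hqr⟩ | ⟨hpr, hqr⟩
    · -- p = 6m+5, q = 6n+1 with n ≥ 1
      obtain ⟨m, rfl⟩ : ∃ m, p = 6 * m + 5 := ⟨p / 6, by omega⟩
      obtain ⟨n, rfl⟩ : ∃ n, q = 6 * n + 1 := ⟨q / 6, by omega⟩
      have hn1 : 1 ≤ n := by omega
      refine hne ⟨m + 1, n, by omega, hn1, Or.inl ?_⟩
      have key : (6 * m + 5) * (6 * n + 1) = 6 * ((6 * m + 5) * n) + 6 * m + 5 := by ring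
      rw [show 6 * (m + 1) - 1 = 6 * m + 5 from by omega]
      omega
    · -- p = 6m+1 with m ≥ 1, q = 6n+5
      obtain ⟨m, rfl⟩ : ∃ m, p = 6 * m + 1 := ⟨p / 6, by omega⟩
      obtain ⟨n, rfl⟩ : ∃ n, q = 6 * n + 5 := ⟨q / 6, by omega⟩
      have hm1 : 1 ≤ m := by omega
      refine hne ⟨m, n + 1, hm1, by omega, Or.inr ?_⟩
      have key : (6 * m + 1) * (6 * n + 5) = 6 * ((6 * m + 1) * n) + 30 * m + 5 := by ring
      have key2 : (6 * m + 1) * (n + 1) = (6 * m + 1) * n + 6 * m + 1 := by ring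
      omega
end

section
/- For every positive integer x, both 6x+5 and 6x+11 are prime if and only if x is NOT expressible in any of the four forms (6m−1)n + m − 1, (6m−1)n + m − 2, (6m+1)n − m − 1, (6m+1)n − m − 2 with m, n positive integers. -/
/-! A number `≡ 5 (mod 6)` has a prime factor `≡ 5 (mod 6)`, since prime factors are `≡ ±1` and a
product of factors `≡ 1` is `≡ 1`. Hence `6k + 5` is composite exactly when it factors as
`(6m - 1)(6n + 1)` with `m, n ≥ 1`, i.e. when `k + 1 = (6m - 1)n + m`. The other two forms
`(6m + 1)n - m` are the same values with `m` and `n` swapped, and `6x + 11` is `6(x + 1) + 5`. -/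

theorem Nat.modEq_one_of_forall_prime_dvd {d n : ℕ} (hn : n ≠ 0)
    (h : ∀ p, p.Prime → p ∣ n → p ≡ 1 [MOD d]) : n ≡ 1 [MOD d] := by
  induction n using Nat.recOnMul with
  | zero => exact absurd rfl hn
  | one => rfl
  | prime p hp => exact h p hp dvd_rfl
  | mul a b iha ihb =>
    obtain ⟨ha, hb⟩ := mul_ne_zero_iff.mp hn
    simpa using (iha ha fun p hp hpa => h p hp (dvd_mul_of_dvd_left hpa b)).mul
      (ihb hb fun p hp hpb => h p hp (dvd_mul_of_dvd_right hpb a))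

theorem Nat.Prime.mod_six_eq_one_or_five {p : ℕ} (hp : p.Prime) (h2 : p ≠ 2) (h3 : p ≠ 3) :
    p % 6 = 1 ∨ p % 6 = 5 := by
  have := hp.eq_one_or_self_of_dvd 2
  have := hp.eq_one_or_self_of_dvd 3
  omega

theorem Nat.exists_prime_dvd_mod_six_eq_five {n : ℕ} (hn : n % 6 = 5) :
    ∃ p, p.Prime ∧ p ∣ n ∧ p % 6 = 5 := by
  by_contra! h
  have : n ≡ 1 [MOD 6] := Nat.modEq_one_of_forall_prime_dvd (by omega) fun p hp hpn =>
    (hp.mod_six_eq_one_or_five (by rintro rfl; omega) (by rintro rfl; omega)).resolve_right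
      (h p hp hpn)
  simp [Nat.ModEq, hn] at this

theorem Nat.not_prime_iff_exists_eq_mul_of_mod_six_eq_five {N : ℕ} (hN : N % 6 = 5) :
    ¬ N.Prime ↔ ∃ m n, 0 < m ∧ 0 < n ∧ N = (6 * m - 1) * (6 * n + 1) := by
  constructor
  · intro hNp
    obtain ⟨p, hp, ⟨e, rfl⟩, hp5⟩ := Nat.exists_prime_dvd_mod_six_eq_five hN
    have he : e % 6 = 1 := by
      rw [Nat.mul_mod, hp5] at hN
      omega
    have he1 : e ≠ 1 := by rintro rfl; simp [hp] at hNp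
    exact ⟨(p + 1) / 6, e / 6, by omega, by omega, by congr 1 <;> omega⟩
  · rintro ⟨m, n, hm, hn, rfl⟩
    exact Nat.not_prime_mul (by omega) (by omega)

theorem Nat.six_mul_sub_one_mul_six_mul_add_one {m : ℕ} (hm : 0 < m) (n : ℕ) :
    (6 * m - 1) * (6 * n + 1) + 1 = 6 * ((6 * m - 1) * n + m) := by
  zify [show 1 ≤ 6 * m by omega]
  ring

theorem Nat.six_mul_add_one_mul_sub_self {m n : ℕ} (hn : 0 < n) :
    (6 * m + 1) * n - m = (6 * n - 1) * m + n := by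
  zify [show m ≤ (6 * m + 1) * n by nlinarith, show 1 ≤ 6 * n by omega]
  ring

theorem Nat.not_prime_six_mul_add_five_iff (k : ℕ) :
    ¬ (6 * k + 5).Prime ↔ ∃ m n, 0 < m ∧ 0 < n ∧
      (k + 1 = (6 * m - 1) * n + m ∨ k + 1 = (6 * m + 1) * n - m) := by
  rw [Nat.not_prime_iff_exists_eq_mul_of_mod_six_eq_five (by omega)]
  constructor
  · rintro ⟨m, n, hm, hn, h⟩
    have := Nat.six_mul_sub_one_mul_six_mul_add_one hm n
    exact ⟨m, n, hm, hn, Or.inl (by omega)⟩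
  · rintro ⟨m, n, hm, hn, h | h⟩
    · have := Nat.six_mul_sub_one_mul_six_mul_add_one hm n
      exact ⟨m, n, hm, hn, by omega⟩
    · have := Nat.six_mul_sub_one_mul_six_mul_add_one hn m
      rw [Nat.six_mul_add_one_mul_sub_self hn] at h
      exact ⟨n, m, hn, hm, by omega⟩

theorem sexy_prime_five_iff_not_general_solution_general (x : ℕ) :
    (Nat.Prime (6 * x + 5) ∧ Nat.Prime (6 * x + 11)) ↔
      ¬ ∃ m n : ℕ, 0 < m ∧ 0 < n ∧
        (x = (6 * m - 1) * n + m - 1 ∨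
         x = (6 * m - 1) * n + m - 2 ∨
         x = (6 * m + 1) * n - m - 1 ∨
         x = (6 * m + 1) * n - m - 2) := by
  rw [and_iff_not_or_not, Nat.not_prime_six_mul_add_five_iff,
    show 6 * x + 11 = 6 * (x + 1) + 5 by ring, Nat.not_prime_six_mul_add_five_iff]
  refine not_congr ⟨?_, ?_⟩
  · rintro (⟨m, n, hm, hn, h⟩ | ⟨m, n, hm, hn, h⟩) <;>
      have := Nat.le_mul_of_pos_right (6 * m - 1) hn <;>
      have := Nat.le_mul_of_pos_right (6 * m + 1) hn <;>
      exact ⟨m, n, hm, hn, by omega⟩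
  · rintro ⟨m, n, hm, hn, h⟩
    have := Nat.le_mul_of_pos_right (6 * m - 1) hn
    have := Nat.le_mul_of_pos_right (6 * m + 1) hn
    rcases h with h | h | h | h
    exacts [.inl ⟨m, n, hm, hn, by omega⟩, .inr ⟨m, n, hm, hn, by omega⟩,
      .inl ⟨m, n, hm, hn, by omega⟩, .inr ⟨m, n, hm, hn, by omega⟩]

/-- For every positive integer `x`, both `6x+5` and `6x+11` are prime iff `x` is not
expressible in any of the four forms `(6m−1)n + m − 1`, `(6m−1)n + m − 2`,
`(6m+1)n − m − 1`, `(6m+1)n − m − 2` with `m, n` positive integers. -/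
theorem sexy_prime_five_iff_not_general_solution (x : ℕ) (hx : 0 < x) :
    (Nat.Prime (6 * x + 5) ∧ Nat.Prime (6 * x + 11)) ↔
      ¬ ∃ m n : ℕ, 0 < m ∧ 0 < n ∧
        (x = (6 * m - 1) * n + m - 1 ∨
         x = (6 * m - 1) * n + m - 2 ∨
         x = (6 * m + 1) * n - m - 1 ∨
         x = (6 * m + 1) * n - m - 2) :=
  sexy_prime_five_iff_not_general_solution_general x
end

section
/- For every positive integer x, both 6x+7 and 6x+13 are prime if and only if x is NOT expressible in any of the four forms (6m−1)n − m − 1, (6m−1)n − m − 2, (6m+1)n + m − 1, (6m+1)n + m − 2 with m, n positive integers. -/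
private lemma factor_iff (N : ℕ) (hN : N % 6 = 1) (h7 : 7 ≤ N) :
    ¬ N.Prime ↔ ∃ m n : ℕ, 0 < m ∧ 0 < n ∧
      (N = (6 * m - 1) * (6 * n - 1) ∨ N = (6 * m + 1) * (6 * n + 1)) := by
  constructor
  · intro hnp
    obtain ⟨a, hdvd, ha2, haN⟩ := Nat.exists_dvd_of_not_prime2 (by omega) hnp
    set b := N / a with hb
    have hab : a * b = N := Nat.mul_div_cancel' hdvd
    have hb2 : 2 ≤ b := by
      rcases Nat.lt_or_ge b 2 with h | h
      · interval_cases b <;> omega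
      · exact h
    have hna2 : ¬ (2 ∣ a) := by
      intro h; have := dvd_trans h hdvd; omega
    have hna3 : ¬ (3 ∣ a) := by
      intro h; have := dvd_trans h hdvd; omega
    have hnb2 : ¬ (2 ∣ b) := by
      intro h; have : 2 ∣ N := hab ▸ Dvd.dvd.mul_left h a; omega
    have hnb3 : ¬ (3 ∣ b) := by
      intro h; have : 3 ∣ N := hab ▸ Dvd.dvd.mul_left h a; omega
    have ha6 : a % 6 = 1 ∨ a % 6 = 5 := by omega
    have hb6 : b % 6 = 1 ∨ b % 6 = 5 := by omega
    have hmod := Nat.mul_mod a b 6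
    rw [hab] at hmod
    rcases ha6 with ha | ha <;> rcases hb6 with hbb | hbb
    · refine ⟨a / 6, b / 6, by omega, by omega, Or.inr ?_⟩
      have e1 : 6 * (a / 6) + 1 = a := by omega
      have e2 : 6 * (b / 6) + 1 = b := by omega
      rw [e1, e2, hab]
    · rw [ha, hbb] at hmod; omega
    · rw [ha, hbb] at hmod; omega
    · refine ⟨(a + 1) / 6, (b + 1) / 6, by omega, by omega, Or.inl ?_⟩
      have e1 : 6 * ((a + 1) / 6) - 1 = a := by omega
      have e2 : 6 * ((b + 1) / 6) - 1 = b := by omega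
      rw [e1, e2, hab]
  · rintro ⟨m, n, hm, hn, h | h⟩ <;> rw [h]
    · exact Nat.not_prime_mul (by omega) (by omega)
    · exact Nat.not_prime_mul (by omega) (by omega)

private lemma form1 (x m n : ℕ) (hm : 0 < m) (hn : 0 < n) :
    x = (6 * m - 1) * n - m - 1 ↔ 6 * x + 7 = (6 * m - 1) * (6 * n - 1) := by
  obtain ⟨m', rfl⟩ : ∃ m', m = m' + 1 := ⟨m - 1, by omega⟩
  obtain ⟨n', rfl⟩ : ∃ n', n = n' + 1 := ⟨n - 1, by omega⟩
  have e1 : 6 * (m' + 1) - 1 = 6 * m' + 5 := by omega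
  have e2 : 6 * (n' + 1) - 1 = 6 * n' + 5 := by omega
  rw [e1, e2]
  have h1 : (6 * m' + 5) * (n' + 1) = 6 * (m' * n') + 6 * m' + 5 * n' + 5 := by ring
  have h2 : (6 * m' + 5) * (6 * n' + 5) = 36 * (m' * n') + 30 * m' + 30 * n' + 25 := by ring
  rw [h1, h2]
  generalize m' * n' = K
  omega

private lemma form2 (x m n : ℕ) (hm : 0 < m) (hn : 0 < n) :
    x = (6 * m - 1) * n - m - 2 ↔ 6 * x + 13 = (6 * m - 1) * (6 * n - 1) := by
  obtain ⟨m', rfl⟩ : ∃ m', m = m' + 1 := ⟨m - 1, by omega⟩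
  obtain ⟨n', rfl⟩ : ∃ n', n = n' + 1 := ⟨n - 1, by omega⟩
  have e1 : 6 * (m' + 1) - 1 = 6 * m' + 5 := by omega
  have e2 : 6 * (n' + 1) - 1 = 6 * n' + 5 := by omega
  rw [e1, e2]
  have h1 : (6 * m' + 5) * (n' + 1) = 6 * (m' * n') + 6 * m' + 5 * n' + 5 := by ring
  have h2 : (6 * m' + 5) * (6 * n' + 5) = 36 * (m' * n') + 30 * m' + 30 * n' + 25 := by ring
  rw [h1, h2]
  generalize m' * n' = K
  omega

private lemma form3 (x m n : ℕ) (hm : 0 < m) (hn : 0 < n) :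
    x = (6 * m + 1) * n + m - 1 ↔ 6 * x + 7 = (6 * m + 1) * (6 * n + 1) := by
  obtain ⟨m', rfl⟩ : ∃ m', m = m' + 1 := ⟨m - 1, by omega⟩
  obtain ⟨n', rfl⟩ : ∃ n', n = n' + 1 := ⟨n - 1, by omega⟩
  have h1 : (6 * (m' + 1) + 1) * (n' + 1) = 6 * (m' * n') + 6 * m' + 7 * n' + 7 := by ring
  have h2 : (6 * (m' + 1) + 1) * (6 * (n' + 1) + 1) =
      36 * (m' * n') + 42 * m' + 42 * n' + 49 := by ring
  rw [h1, h2]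
  generalize m' * n' = K
  omega

private lemma form4 (x m n : ℕ) (hm : 0 < m) (hn : 0 < n) :
    x = (6 * m + 1) * n + m - 2 ↔ 6 * x + 13 = (6 * m + 1) * (6 * n + 1) := by
  obtain ⟨m', rfl⟩ : ∃ m', m = m' + 1 := ⟨m - 1, by omega⟩
  obtain ⟨n', rfl⟩ : ∃ n', n = n' + 1 := ⟨n - 1, by omega⟩
  have h1 : (6 * (m' + 1) + 1) * (n' + 1) = 6 * (m' * n') + 6 * m' + 7 * n' + 7 := by ring
  have h2 : (6 * (m' + 1) + 1) * (6 * (n' + 1) + 1) =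
      36 * (m' * n') + 42 * m' + 42 * n' + 49 := by ring
  rw [h1, h2]
  generalize m' * n' = K
  omega

/-- For every positive integer `x`, both `6x+7` and `6x+13` are prime iff `x` is not
expressible in any of the four forms `(6m−1)n − m − 1`, `(6m−1)n − m − 2`,
`(6m+1)n + m − 1`, `(6m+1)n + m − 2` with `m, n` positive integers. -/
theorem sexy_prime_seven_iff_not_general_solution (x : ℕ) (hx : 0 < x) :
    (Nat.Prime (6 * x + 7) ∧ Nat.Prime (6 * x + 13)) ↔
      ¬ ∃ m n : ℕ, 0 < m ∧ 0 < n ∧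
        (x = (6 * m - 1) * n - m - 1 ∨
         x = (6 * m - 1) * n - m - 2 ∨
         x = (6 * m + 1) * n + m - 1 ∨
         x = (6 * m + 1) * n + m - 2) := by
  rw [← not_iff_not, not_not, not_and_or]
  constructor
  · intro h
    rcases h with h7 | h13
    · obtain ⟨m, n, hm, hn, hc⟩ := (factor_iff (6 * x + 7) (by omega) (by omega)).mp h7
      refine ⟨m, n, hm, hn, ?_⟩
      rcases hc with h | h
      · exact Or.inl ((form1 x m n hm hn).mpr h)
      · exact Or.inr (Or.inr (Or.inl ((form3 x m n hm hn).mpr h)))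
    · obtain ⟨m, n, hm, hn, hc⟩ := (factor_iff (6 * x + 13) (by omega) (by omega)).mp h13
      refine ⟨m, n, hm, hn, ?_⟩
      rcases hc with h | h
      · exact Or.inr (Or.inl ((form2 x m n hm hn).mpr h))
      · exact Or.inr (Or.inr (Or.inr ((form4 x m n hm hn).mpr h)))
  · rintro ⟨m, n, hm, hn, h | h | h | h⟩
    · exact Or.inl ((factor_iff (6 * x + 7) (by omega) (by omega)).mpr
        ⟨m, n, hm, hn, Or.inl ((form1 x m n hm hn).mp h)⟩)
    · exact Or.inr ((factor_iff (6 * x + 13) (by omega) (by omega)).mpr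
        ⟨m, n, hm, hn, Or.inl ((form2 x m n hm hn).mp h)⟩)
    · exact Or.inl ((factor_iff (6 * x + 7) (by omega) (by omega)).mpr
        ⟨m, n, hm, hn, Or.inr ((form3 x m n hm hn).mp h)⟩)
    · exact Or.inr ((factor_iff (6 * x + 13) (by omega) (by omega)).mpr
        ⟨m, n, hm, hn, Or.inr ((form4 x m n hm hn).mp h)⟩)
end
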